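/- Let a be a C² vector field on U, let the Γ^k_{ij} be of class C¹, let ρ ∈ C²(U), and let F ∈ C²(ℝ). Then pointwise on U: F'(ρ) Λ(ρ) − Λ(F(ρ)) = G_F(ρ) Λ(1) − F''(ρ) (a(ρ))², where Λ(1) = Div((Div a) a). -/

import Mathlib

open scoped BigOperators

/-- Partial derivative in the `j`-th coordinate direction. -/
noncomputable def pd {d : ℕ} (j : Fin d) (f : (Fin d → ℝ) → ℝ) (x : Fin d → ℝ) : ℝ :=
  fderiv ℝ f x (Pi.single j 1)

/-- Divergence of a vector field relative to the Christoffel symbols `Γ`: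
`DivVF X := ∂_j X^j + Γ^j_{kj} X^k`. -/
noncomputable def DivVF {d : ℕ} (Γ : Fin d → Fin d → Fin d → (Fin d → ℝ) → ℝ)
    (X : Fin d → (Fin d → ℝ) → ℝ) (x : Fin d → ℝ) : ℝ :=
  (∑ j, pd j (X j) x) + ∑ k, ∑ j, Γ j k j x * X k x

/-- The second order operator `Λ(ψ) := Div(Div(ψ a) a)`. -/
noncomputable def Lam {d : ℕ} (Γ : Fin d → Fin d → Fin d → (Fin d → ℝ) → ℝ)
    (a : Fin d → (Fin d → ℝ) → ℝ) (ψ : (Fin d → ℝ) → ℝ) (x : Fin d → ℝ) : ℝ :=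
  DivVF Γ (fun l y => DivVF Γ (fun j z => ψ z * a j z) y * a l y) x

/-! Leibniz's rule for the divergence, `Div(ψ X) = ψ Div X + X(ψ)`, applied twice gives
`Λ(ψ) = ψ Λ(1) + 2 (Div a) a(ψ) + a(a(ψ))`. For `ψ = F(ρ)` the chain rule gives
`a(F(ρ)) = F'(ρ) a(ρ)` and `a(a(F(ρ))) = F''(ρ) a(ρ)² + F'(ρ) a(a(ρ))`, so in `F'(ρ) Λ(ρ) − Λ(F(ρ))`
the terms in `Div a` and `a(a(ρ))` cancel. -/

open Filter Topology

/-- `X(ψ) = X^j ∂_j ψ`. -/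
noncomputable def derivAlong {d : ℕ} (X : Fin d → (Fin d → ℝ) → ℝ) (ψ : (Fin d → ℝ) → ℝ)
    (x : Fin d → ℝ) : ℝ :=
  ∑ j, X j x * pd j ψ x

section PartialDerivative

variable {d : ℕ} {j : Fin d} {f g : (Fin d → ℝ) → ℝ} {x : Fin d → ℝ}

lemma pd_congr (h : f =ᶠ[𝓝 x] g) : pd j f x = pd j g x := by
  rw [pd, pd, h.fderiv_eq]

lemma pd_add (hf : DifferentiableAt ℝ f x) (hg : DifferentiableAt ℝ g x) :
    pd j (fun y => f y + g y) x = pd j f x + pd j g x := by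
  simp [pd, fderiv_fun_add hf hg]

lemma pd_mul (hf : DifferentiableAt ℝ f x) (hg : DifferentiableAt ℝ g x) :
    pd j (fun y => f y * g y) x = pd j f x * g x + f x * pd j g x := by
  simp [pd, fderiv_fun_mul hf hg]
  ring

lemma pd_comp {F : ℝ → ℝ} (hF : DifferentiableAt ℝ F (f x)) (hf : DifferentiableAt ℝ f x) :
    pd j (fun y => F (f y)) x = deriv F (f x) * pd j f x := by
  have hcomp := (hF.hasDerivAt.comp_hasFDerivAt x hf.hasFDerivAt).fderiv
  rw [Function.comp_def] at hcomp
  simp [pd, hcomp]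

lemma differentiableAt_pd (hf : ContDiffAt ℝ 2 f x) (j : Fin d) :
    DifferentiableAt ℝ (pd j f) x :=
  ((hf.fderiv_right (by norm_num)).clm_apply contDiffAt_const).differentiableAt one_ne_zero

end PartialDerivative

section DerivAlong

variable {d : ℕ} {X : Fin d → (Fin d → ℝ) → ℝ} {f g : (Fin d → ℝ) → ℝ} {x : Fin d → ℝ}

lemma derivAlong_congr (h : f =ᶠ[𝓝 x] g) : derivAlong X f x = derivAlong X g x := by
  simp only [derivAlong, pd_congr h]

lemma derivAlong_add (hf : DifferentiableAt ℝ f x) (hg : DifferentiableAt ℝ g x) :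
    derivAlong X (fun y => f y + g y) x = derivAlong X f x + derivAlong X g x := by
  simp only [derivAlong, pd_add hf hg, mul_add, Finset.sum_add_distrib]

lemma derivAlong_mul (hf : DifferentiableAt ℝ f x) (hg : DifferentiableAt ℝ g x) :
    derivAlong X (fun y => f y * g y) x = derivAlong X f x * g x + f x * derivAlong X g x := by
  simp only [derivAlong, pd_mul hf hg, Finset.sum_mul, Finset.mul_sum, ← Finset.sum_add_distrib]
  exact Finset.sum_congr rfl fun _ _ => by ring

lemma derivAlong_comp {F : ℝ → ℝ} (hF : DifferentiableAt ℝ F (f x))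
    (hf : DifferentiableAt ℝ f x) :
    derivAlong X (fun y => F (f y)) x = deriv F (f x) * derivAlong X f x := by
  simp only [derivAlong, pd_comp hF hf, Finset.mul_sum]
  exact Finset.sum_congr rfl fun _ _ => by ring

lemma differentiableAt_derivAlong (hX : ∀ j, DifferentiableAt ℝ (X j) x)
    (hf : ContDiffAt ℝ 2 f x) : DifferentiableAt ℝ (derivAlong X f) x := by
  unfold derivAlong
  exact DifferentiableAt.fun_sum fun j _ => (hX j).mul (differentiableAt_pd hf j)

lemma derivAlong_derivAlong_comp {F : ℝ → ℝ} (hF : ContDiff ℝ 2 F)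
    (hX : ∀ j, DifferentiableAt ℝ (X j) x) (hf : ContDiffAt ℝ 2 f x) :
    derivAlong X (derivAlong X fun y => F (f y)) x
      = deriv (deriv F) (f x) * derivAlong X f x ^ 2
        + deriv F (f x) * derivAlong X (derivAlong X f) x := by
  have hFd : Differentiable ℝ F := hF.differentiable (by norm_num)
  have hF'd : Differentiable ℝ (deriv F) := hF.differentiable_deriv_two
  have hfd : DifferentiableAt ℝ f x := hf.differentiableAt (by norm_num)
  have hchain : derivAlong X (fun y => F (f y)) =ᶠ[𝓝 x]
      fun y => deriv F (f y) * derivAlong X f y :=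
    (hf.eventually (by simp)).mono fun y hy =>
      derivAlong_comp (hFd _) (hy.differentiableAt (by norm_num))
  rw [derivAlong_congr hchain,
    derivAlong_mul (f := fun y => deriv F (f y)) ((hF'd _).comp x hfd)
      (differentiableAt_derivAlong hX hf),
    derivAlong_comp (hF'd _) hfd]
  ring

end DerivAlong

section Divergence

variable {d : ℕ} {Γ : Fin d → Fin d → Fin d → (Fin d → ℝ) → ℝ} {X a : Fin d → (Fin d → ℝ) → ℝ}
  {ψ : (Fin d → ℝ) → ℝ} {x : Fin d → ℝ}

lemma DivVF_mul (hψ : DifferentiableAt ℝ ψ x) (hX : ∀ j, DifferentiableAt ℝ (X j) x) :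
    DivVF Γ (fun j y => ψ y * X j y) x = ψ x * DivVF Γ X x + derivAlong X ψ x := by
  simp only [DivVF, derivAlong, pd_mul hψ (hX _), Finset.sum_add_distrib, mul_add, Finset.mul_sum,
    mul_left_comm (Γ _ _ _ x) (ψ x), mul_comm (pd _ ψ x)]
  ring

lemma differentiableAt_DivVF (hΓ : ∀ k i j, DifferentiableAt ℝ (Γ k i j) x)
    (hX : ∀ j, ContDiffAt ℝ 2 (X j) x) : DifferentiableAt ℝ (DivVF Γ X) x := by
  unfold DivVF
  exact (DifferentiableAt.fun_sum fun j _ => differentiableAt_pd (hX j) j).add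
    (DifferentiableAt.fun_sum fun k _ => DifferentiableAt.fun_sum fun j _ =>
      (hΓ j k j).mul ((hX k).differentiableAt (by norm_num)))

lemma Lam_one (hD : DifferentiableAt ℝ (DivVF Γ a) x) (ha : ∀ j, DifferentiableAt ℝ (a j) x) :
    Lam Γ a (fun _ => 1) x = DivVF Γ a x ^ 2 + derivAlong a (DivVF Γ a) x := by
  simp only [Lam, one_mul]
  rw [DivVF_mul hD ha]
  ring

lemma Lam_eq_mul_Lam_one_add (hΓ : ∀ k i j, DifferentiableAt ℝ (Γ k i j) x)
    (ha : ∀ j, ContDiffAt ℝ 2 (a j) x) (hψ : ContDiffAt ℝ 2 ψ x) :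
    Lam Γ a ψ x = ψ x * Lam Γ a (fun _ => 1) x + 2 * DivVF Γ a x * derivAlong a ψ x
      + derivAlong a (derivAlong a ψ) x := by
  have hD := differentiableAt_DivVF hΓ ha
  have ha' : ∀ j, DifferentiableAt ℝ (a j) x := fun j => (ha j).differentiableAt (by norm_num)
  have hψ' : DifferentiableAt ℝ ψ x := hψ.differentiableAt (by norm_num)
  have hAψ := differentiableAt_derivAlong ha' hψ
  have hinner : DivVF Γ (fun j y => ψ y * a j y) =ᶠ[𝓝 x]
      fun y => ψ y * DivVF Γ a y + derivAlong a ψ y :=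
    ((hψ.eventually (by simp)).and (eventually_all.2 fun j => (ha j).eventually (by simp))).mono
      fun y hy => DivVF_mul (hy.1.differentiableAt (by norm_num))
        fun j => (hy.2 j).differentiableAt (by norm_num)
  have hinner' : DifferentiableAt ℝ (DivVF Γ fun j y => ψ y * a j y) x :=
    ((hψ'.mul hD).add hAψ).congr_of_eventuallyEq hinner
  rw [Lam, DivVF_mul hinner' ha', derivAlong_congr hinner, hinner.eq_of_nhds,
    derivAlong_add (f := fun y => ψ y * DivVF Γ a y) (hψ'.mul hD) hAψ, derivAlong_mul hψ' hD,
    Lam_one hD ha']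
  ring

end Divergence

/-- For a `C²` vector field `a`, `C¹` Christoffel symbols, `ρ ∈ C²(U)`,
`F ∈ C²(ℝ)`: pointwise on `U`,
`F'(ρ) Λ(ρ) − Λ(F(ρ)) = G_F(ρ) Λ(1) − F''(ρ) (a(ρ))²`, where `G_F(ξ) = ξF'(ξ) − F(ξ)`
and `a(ρ) = a^j ∂_j ρ`. -/
theorem statement5 {d : ℕ} (U : Set (Fin d → ℝ)) (hU : IsOpen U)
    (Γ : Fin d → Fin d → Fin d → (Fin d → ℝ) → ℝ)
    (hΓ : ∀ k i j, ContDiffOn ℝ 1 (Γ k i j) U)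
    (a : Fin d → (Fin d → ℝ) → ℝ) (ha : ∀ l, ContDiffOn ℝ 2 (a l) U)
    (ρ : (Fin d → ℝ) → ℝ) (hρ : ContDiffOn ℝ 2 ρ U)
    (F : ℝ → ℝ) (hF : ContDiff ℝ 2 F) :
    ∀ x ∈ U,
      deriv F (ρ x) * Lam Γ a ρ x - Lam Γ a (fun y => F (ρ y)) x
        = (ρ x * deriv F (ρ x) - F (ρ x)) * Lam Γ a (fun _ => 1) x
          - deriv (deriv F) (ρ x) * (∑ j, a j x * pd j ρ x) ^ 2 := by
  intro x hx
  have hΓx : ∀ k i j, DifferentiableAt ℝ (Γ k i j) x := fun k i j =>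
    ((hΓ k i j).contDiffAt (hU.mem_nhds hx)).differentiableAt one_ne_zero
  have hax : ∀ l, ContDiffAt ℝ 2 (a l) x := fun l => (ha l).contDiffAt (hU.mem_nhds hx)
  have hρx : ContDiffAt ℝ 2 ρ x := hρ.contDiffAt (hU.mem_nhds hx)
  have hax' : ∀ l, DifferentiableAt ℝ (a l) x := fun l => (hax l).differentiableAt (by norm_num)
  have hρx' : DifferentiableAt ℝ ρ x := hρx.differentiableAt (by norm_num)
  rw [Lam_eq_mul_Lam_one_add hΓx hax hρx,
    Lam_eq_mul_Lam_one_add (ψ := fun y => F (ρ y)) hΓx hax (hF.contDiffAt.comp x hρx),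
    derivAlong_comp (hF.differentiable (by norm_num) _) hρx',
    derivAlong_derivAlong_comp hF hax' hρx]
  change _ = _ - _ * derivAlong a ρ x ^ 2
  ring
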